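/- Set ξ₃ = δ₁δ₂δ₁ and ξ₄ = δ₁δ₂δ₃δ₁δ₂δ₁ in B₄(S²). Then ξ₃² and ξ₄² both belong to the pure sphere braid group P₄(S²) = ker π₄, and each commutes with every element of P₄(S²); i.e., ξ₃² and ξ₄² lie in the center of P₄(S²). -/

import Mathlib

/-!
Write `τ = δ₁δ₂δ₃` and `ρ = δ₃δ₂δ₁`. Then `ξ₄ = τ ξ₃`, and commuting `δ₁` past `δ₃` also gives
`ξ₄ = ξ₃ ρ`; the sphere relation says `ρ τ = 1`, so `ξ₄² = ξ₃ ρ τ ξ₃ = ξ₃²`. Conjugation by `ξ₄`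
exchanges `δ₁ ↔ δ₃` and fixes `δ₂`, so `ξ₄²` commutes with every generator and is central in all
of `B₄(S²)`, a fortiori in `P₄(S²)`. Finally `π₄(ξ₄)` is the involution `i ↦ 3 - i`.
-/

/-- The relators of the sphere braid group `B₄(S²)`: the two braid relations, the
commutation relation, and the sphere relation `δ₁δ₂δ₃δ₃δ₂δ₁ = 1`. -/
def sphereBraidRel4 : Set (FreeGroup (Fin 3)) :=
  {FreeGroup.of 0 * FreeGroup.of 1 * FreeGroup.of 0 *
      (FreeGroup.of 1 * FreeGroup.of 0 * FreeGroup.of 1)⁻¹,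
   FreeGroup.of 1 * FreeGroup.of 2 * FreeGroup.of 1 *
      (FreeGroup.of 2 * FreeGroup.of 1 * FreeGroup.of 2)⁻¹,
   FreeGroup.of 0 * FreeGroup.of 2 * (FreeGroup.of 2 * FreeGroup.of 0)⁻¹,
   FreeGroup.of 0 * FreeGroup.of 1 * FreeGroup.of 2 *
      FreeGroup.of 2 * FreeGroup.of 1 * FreeGroup.of 0}

/-- The sphere braid group `B₄(S²)` on 4 strands. -/
abbrev SphereBraidGroup4 : Type := PresentedGroup sphereBraidRel4

/-- The standard generators `δ₁, δ₂, δ₃` of `B₄(S²)` (indexed by `0, 1, 2`). -/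
def δ (i : Fin 3) : SphereBraidGroup4 := PresentedGroup.of i

/-- The adjacent transpositions in `S₄`. -/
def spherePermGen : Fin 3 → Equiv.Perm (Fin 4) := ![Equiv.swap 0 1, Equiv.swap 1 2, Equiv.swap 2 3]

lemma spherePermGen_rel : ∀ r ∈ sphereBraidRel4, FreeGroup.lift spherePermGen r = 1 := by
  intro r hr
  rcases hr with hr | hr | hr | hr <;>
    (subst hr; simp only [map_mul, map_inv, FreeGroup.lift_apply_of]; decide)

/-- The projection `π₄ : B₄(S²) → S₄` sending `δᵢ` to the transposition `(i-1, i)`. -/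
def πB4S2 : SphereBraidGroup4 →* Equiv.Perm (Fin 4) := PresentedGroup.toGroup spherePermGen_rel

/-- The half twist `ξ₃ = δ₁δ₂δ₁` of the first three strands. -/
def ξ₃ : SphereBraidGroup4 := δ 0 * δ 1 * δ 0

/-- The half twist `ξ₄ = δ₁δ₂δ₃δ₁δ₂δ₁` of all four strands. -/
def ξ₄ : SphereBraidGroup4 := δ 0 * δ 1 * δ 2 * δ 0 * δ 1 * δ 0

theorem PresentedGroup.commute_of_forall_commute_of {α : Type*} {rels : Set (FreeGroup α)}
    {z : PresentedGroup rels} (h : ∀ i, Commute z (PresentedGroup.of i))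
    (x : PresentedGroup rels) : Commute z x :=
  (Subgroup.mem_centralizer_singleton_iff.1 <| PresentedGroup.generated_by rels _
    (fun i => Subgroup.mem_centralizer_singleton_iff.2 (h i).symm) x).symm

namespace SphereBraidGroup4

theorem δ_braid_01 : δ 0 * δ 1 * δ 0 = δ 1 * δ 0 * δ 1 :=
  PresentedGroup.mk_eq_mk_of_mul_inv_mem (by simp [sphereBraidRel4])

theorem δ_braid_12 : δ 1 * δ 2 * δ 1 = δ 2 * δ 1 * δ 2 :=
  PresentedGroup.mk_eq_mk_of_mul_inv_mem (by simp [sphereBraidRel4])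

theorem δ_commute_02 : Commute (δ 0) (δ 2) :=
  show δ 0 * δ 2 = δ 2 * δ 0 from
    PresentedGroup.mk_eq_mk_of_mul_inv_mem (x := .of 0 * .of 2) (by simp [sphereBraidRel4])

theorem δ_sphere : δ 0 * δ 1 * δ 2 * δ 2 * δ 1 * δ 0 = 1 :=
  PresentedGroup.one_of_mem (x := .of 0 * .of 1 * .of 2 * .of 2 * .of 1 * .of 0)
    (by simp [sphereBraidRel4])

theorem ξ₃_semiconj_δ0 : SemiconjBy ξ₃ (δ 0) (δ 1) :=
  calc ξ₃ * δ 0 = δ 1 * δ 0 * δ 1 * δ 0 := by rw [ξ₃, δ_braid_01]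
    _ = δ 1 * ξ₃ := by rw [ξ₃]; group

theorem ξ₃_semiconj_δ1 : SemiconjBy ξ₃ (δ 1) (δ 0) :=
  calc ξ₃ * δ 1 = δ 0 * (δ 1 * δ 0 * δ 1) := by rw [ξ₃]; group
    _ = δ 0 * ξ₃ := by rw [← δ_braid_01, ξ₃]

theorem semiconj_δ012_δ0 : SemiconjBy (δ 0 * δ 1 * δ 2) (δ 0) (δ 1) :=
  calc δ 0 * δ 1 * δ 2 * δ 0 = δ 0 * δ 1 * (δ 2 * δ 0) := by group
    _ = δ 0 * δ 1 * δ 0 * δ 2 := by rw [← δ_commute_02.eq]; group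
    _ = δ 1 * δ 0 * δ 1 * δ 2 := by rw [δ_braid_01]
    _ = δ 1 * (δ 0 * δ 1 * δ 2) := by group

theorem semiconj_δ012_δ1 : SemiconjBy (δ 0 * δ 1 * δ 2) (δ 1) (δ 2) :=
  calc δ 0 * δ 1 * δ 2 * δ 1 = δ 0 * (δ 1 * δ 2 * δ 1) := by group
    _ = δ 0 * δ 2 * (δ 1 * δ 2) := by rw [δ_braid_12]; group
    _ = δ 2 * (δ 0 * δ 1 * δ 2) := by rw [δ_commute_02.eq]; group

theorem semiconj_δ210_δ2 : SemiconjBy (δ 2 * δ 1 * δ 0) (δ 2) (δ 1) :=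
  calc δ 2 * δ 1 * δ 0 * δ 2 = δ 2 * δ 1 * (δ 0 * δ 2) := by group
    _ = δ 2 * δ 1 * δ 2 * δ 0 := by rw [δ_commute_02.eq]; group
    _ = δ 1 * δ 2 * δ 1 * δ 0 := by rw [δ_braid_12]
    _ = δ 1 * (δ 2 * δ 1 * δ 0) := by group

theorem semiconj_δ210_δ1 : SemiconjBy (δ 2 * δ 1 * δ 0) (δ 1) (δ 0) :=
  calc δ 2 * δ 1 * δ 0 * δ 1 = δ 2 * (δ 1 * δ 0 * δ 1) := by group
    _ = δ 2 * δ 0 * (δ 1 * δ 0) := by rw [← δ_braid_01]; group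
    _ = δ 0 * (δ 2 * δ 1 * δ 0) := by rw [← δ_commute_02.eq]; group

theorem ξ₄_eq_δ012_mul_ξ₃ : ξ₄ = δ 0 * δ 1 * δ 2 * ξ₃ := by
  simp only [ξ₄, ξ₃, mul_assoc]

theorem ξ₄_eq_ξ₃_mul_δ210 : ξ₄ = ξ₃ * (δ 2 * δ 1 * δ 0) := by
  calc ξ₄ = δ 0 * δ 1 * (δ 2 * δ 0) * δ 1 * δ 0 := by simp only [ξ₄, mul_assoc]
    _ = ξ₃ * (δ 2 * δ 1 * δ 0) := by rw [← δ_commute_02.eq, ξ₃]; group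

theorem δ210_mul_δ012 : δ 2 * δ 1 * δ 0 * (δ 0 * δ 1 * δ 2) = 1 :=
  mul_eq_one_comm.1 (by rw [← δ_sphere]; group)

theorem ξ₄_sq_eq_ξ₃_sq : ξ₄ ^ 2 = ξ₃ ^ 2 := by
  calc ξ₄ ^ 2 = ξ₃ * (δ 2 * δ 1 * δ 0 * (δ 0 * δ 1 * δ 2)) * ξ₃ := by
        rw [sq]; nth_rw 1 [ξ₄_eq_ξ₃_mul_δ210]; rw [ξ₄_eq_δ012_mul_ξ₃]; group
    _ = ξ₃ ^ 2 := by rw [δ210_mul_δ012, mul_one, sq]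

theorem ξ₄_semiconj_δ (i : Fin 3) : SemiconjBy ξ₄ (δ i) (δ i.rev) := by
  fin_cases i
  · rw [ξ₄_eq_δ012_mul_ξ₃]
    exact semiconj_δ012_δ1.mul_left ξ₃_semiconj_δ0
  · rw [ξ₄_eq_δ012_mul_ξ₃]
    exact semiconj_δ012_δ0.mul_left ξ₃_semiconj_δ1
  · rw [ξ₄_eq_ξ₃_mul_δ210]
    exact ξ₃_semiconj_δ1.mul_left semiconj_δ210_δ2

theorem ξ₄_sq_commute (x : SphereBraidGroup4) : Commute (ξ₄ ^ 2) x :=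
  PresentedGroup.commute_of_forall_commute_of (fun i => by
    have h := (ξ₄_semiconj_δ i.rev).mul_left (ξ₄_semiconj_δ i)
    rwa [Fin.rev_rev, ← sq] at h) x

theorem πB4S2_ξ₄_sq : πB4S2 (ξ₄ ^ 2) = 1 := by
  simp only [ξ₄, δ, map_pow, map_mul, πB4S2, PresentedGroup.toGroup.of]
  decide

end SphereBraidGroup4

/-- `ξ₃²` and `ξ₄²` are pure sphere braids and are central in the pure sphere braid
group `P₄(S²) = ker π₄`. -/
theorem halfTwists_sq_central_in_pureSphereBraidGroup4 :
    ξ₃ ^ 2 ∈ πB4S2.ker ∧ ξ₄ ^ 2 ∈ πB4S2.ker ∧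
      ∀ p ∈ πB4S2.ker, Commute (ξ₃ ^ 2) p ∧ Commute (ξ₄ ^ 2) p := by
  rw [← SphereBraidGroup4.ξ₄_sq_eq_ξ₃_sq]
  have central := SphereBraidGroup4.ξ₄_sq_commute
  exact ⟨SphereBraidGroup4.πB4S2_ξ₄_sq, SphereBraidGroup4.πB4S2_ξ₄_sq,
    fun p _ => ⟨central p, central p⟩⟩
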